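/- Let γ > 1 be real and let W_1,…,W_K be strictly positive reals. Define α_k* = (γ W_k)^{1/(1−γ)} / ∑_{j=1}^K (γ W_j)^{1/(1−γ)} for k = 1,…,K. Then (i) α_k* > 0 for all k and ∑_{k=1}^K α_k* = 1; and (ii) for every α ∈ ℝ^K with α_k ≥ 0 for all k and ∑_{k=1}^K α_k = 1, one has ∑_{k=1}^K (α_k*)^γ W_k ≤ ∑_{k=1}^K α_k^γ W_k. That is, α* is a global minimizer of ∑_k α_k^γ W_k over the probability simplex. -/

import Mathlib

/-- Tangent-line inequality for `x ↦ x ^ γ`, `γ ≥ 1`, at a point `a > 0`. -/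
lemma rpow_tangent_le {γ a x : ℝ} (hγ : 1 ≤ γ) (ha : 0 < a) (hx : 0 ≤ x) :
    a ^ γ + γ * a ^ (γ - 1) * (x - a) ≤ x ^ γ := by
  have hs : -1 ≤ x / a - 1 := by
    have : 0 ≤ x / a := div_nonneg hx ha.le
    linarith
  have hB := one_add_mul_self_le_rpow_one_add hs hγ
  have h1 : (1 + (x / a - 1)) = x / a := by ring
  rw [h1] at hB
  have hdiv : (x / a) ^ γ = x ^ γ / a ^ γ := Real.div_rpow hx ha.le γ
  have hapos : 0 < a ^ γ := Real.rpow_pos_of_pos ha γ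
  have hmul := mul_le_mul_of_nonneg_right hB hapos.le
  rw [hdiv, div_mul_cancel₀ _ hapos.ne'] at hmul
  have hpow : a ^ (γ - 1) = a ^ γ / a := by
    rw [Real.rpow_sub ha, Real.rpow_one]
  calc a ^ γ + γ * a ^ (γ - 1) * (x - a)
      = (1 + γ * (x / a - 1)) * a ^ γ := by
        rw [hpow]; field_simp
    _ ≤ x ^ γ := hmul

/-- The closed-form view weights `α_k* = (γ W_k)^{1/(1−γ)} / ∑_j (γ W_j)^{1/(1−γ)}`
are positive, sum to one, and globally minimize `∑ k, α_k^γ W_k` over the probability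
simplex. -/
theorem view_weight_update_is_global_minimizer
    (K : ℕ) (hK : 0 < K) (γ : ℝ) (hγ : 1 < γ)
    (W : Fin K → ℝ) (hW : ∀ k, 0 < W k) :
    let αStar : Fin K → ℝ :=
      fun k => (γ * W k) ^ (1 / (1 - γ)) / ∑ j, (γ * W j) ^ (1 / (1 - γ))
    (∀ k, 0 < αStar k) ∧ (∑ k, αStar k = 1) ∧
      ∀ α : Fin K → ℝ, (∀ k, 0 ≤ α k) → (∑ k, α k = 1) →
        ∑ k, αStar k ^ γ * W k ≤ ∑ k, α k ^ γ * W k := by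
  intro αStar
  have hγ0 : (0:ℝ) < γ := by linarith
  set e : ℝ := 1 / (1 - γ) with he
  set S : ℝ := ∑ j, (γ * W j) ^ e with hSdef
  have hterm : ∀ j : Fin K, 0 < (γ * W j) ^ e :=
    fun j => Real.rpow_pos_of_pos (mul_pos hγ0 (hW j)) e
  have hS : 0 < S :=
    Finset.sum_pos (fun j _ => hterm j) ⟨⟨0, hK⟩, Finset.mem_univ _⟩
  have hpos : ∀ k, 0 < αStar k := fun k => div_pos (hterm k) hS
  have hsum : ∑ k, αStar k = 1 := by
    simp only [αStar, ← Finset.sum_div, ← hSdef, div_self hS.ne']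
    exact div_self hS.ne'
  refine ⟨hpos, hsum, ?_⟩
  intro α hα hαsum
  set c : ℝ := (γ * S ^ (γ - 1))⁻¹ with hc
  have hkey : ∀ k, αStar k ^ (γ - 1) * W k = c := by
    intro k
    have h1 : αStar k ^ (γ - 1) = ((γ * W k) ^ e) ^ (γ - 1) / S ^ (γ - 1) :=
      Real.div_rpow (hterm k).le hS.le (γ - 1)
    have h2 : ((γ * W k) ^ e) ^ (γ - 1) = (γ * W k) ^ (e * (γ - 1)) :=
      (Real.rpow_mul (mul_pos hγ0 (hW k)).le e (γ - 1)).symm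
    have h3 : e * (γ - 1) = -1 := by
      have hne : (1:ℝ) - γ ≠ 0 := by linarith
      rw [he, div_mul_eq_mul_div, one_mul, div_eq_iff hne]; ring
    rw [h1, h2, h3, Real.rpow_neg_one, hc]
    have hWk := (hW k).ne'
    have hSγ : (0:ℝ) < S ^ (γ - 1) := Real.rpow_pos_of_pos hS _
    field_simp
  have hstep : ∀ k, αStar k ^ γ * W k + γ * c * (α k - αStar k) ≤ α k ^ γ * W k := by
    intro k
    have ht := rpow_tangent_le hγ.le (hpos k) (hα k)
    have := mul_le_mul_of_nonneg_right ht (hW k).le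
    calc αStar k ^ γ * W k + γ * c * (α k - αStar k)
        = (αStar k ^ γ + γ * αStar k ^ (γ - 1) * (α k - αStar k)) * W k := by
          rw [← hkey k]; ring
      _ ≤ α k ^ γ * W k := this
  calc ∑ k, αStar k ^ γ * W k
      = ∑ k, (αStar k ^ γ * W k + γ * c * (α k - αStar k)) := by
        rw [Finset.sum_add_distrib, ← Finset.mul_sum, Finset.sum_sub_distrib,
          hαsum, hsum]
        ring
    _ ≤ ∑ k, α k ^ γ * W k := Finset.sum_le_sum (fun k _ => hstep k)
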